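/- Let X be a circle-module over k. Then for every integer n there is an isomorphism of k-vector spaces H^n(X[[t,θ]]) ≅ H^n(X[[t]]) ⊕ H^{n−1}(X[[t]]). (This is the mod-p Z/p-Gysin decomposition: the cohomology of the Z/p-homotopy-fixed-point model of a complex with circle action splits into two copies of the cohomology of its S^1-homotopy-fixed-point model, one shifted down by one degree; it is the chain-level content of Proposition 1.5 of the paper.) -/

import Mathlib

/-!
Common setup: circle-modules over a field `k` of characteristic `p`, and the explicit
homotopy-fixed-point complexes `X[[t]]`, `X[[t,θ]]`, `X[[t]]⟨1,θ⟩` together with the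
`ℤ/p`-Gysin comparison map `φ_p`.
-/

variable {k : Type} [Field k] {p : ℕ}

/-- The sign `(-1)^n` as an element of `k`. -/
def sgn (k : Type) [Field k] (n : ℤ) : k := if Even n then 1 else -1

/-- Cast along an equality of degrees. -/
def gcast (X : ℤ → ModuleCat k) {m n : ℤ} (h : m = n) : X m →ₗ[k] X n := by
  subst h; exact LinearMap.id

/-- A circle-module over `k`: a `ℤ`-graded cochain complex of `k`-vector spaces with a
degree-`0` chain automorphism `τ` satisfying `τ^p = 1`, and a degree-`(-1)` operator `σ`
satisfying `σ∘σ = 0`, `σ∘τ = τ∘σ` and `d∘σ + σ∘d = τ - 1`; i.e. a dg-module over the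
dg-algebra `k[τ,σ]/(τ^p = 1, σ² = 0, τσ = στ)` with `dσ = τ - 1`. -/
structure CircleModule (k : Type) [Field k] (p : ℕ) where
  X : ℤ → ModuleCat k
  d : ∀ n : ℤ, X n →ₗ[k] X (n + 1)
  tau : ∀ n : ℤ, X n →ₗ[k] X n
  sigma : ∀ n : ℤ, X n →ₗ[k] X (n - 1)
  d_comp_d : ∀ n : ℤ, (d (n + 1)).comp (d n) = 0
  d_comm_tau : ∀ n : ℤ, (d n).comp (tau n) = (tau (n + 1)).comp (d n)
  tau_pow_eq_one : ∀ n : ℤ, (tau n : Module.End k (X n)) ^ p = 1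
  sigma_comp_sigma : ∀ n : ℤ, (sigma (n - 1)).comp (sigma n) = 0
  sigma_comm_tau : ∀ n : ℤ, (sigma n).comp (tau n) = (tau (n - 1)).comp (sigma n)
  d_sigma_homotopy : ∀ n : ℤ,
    (gcast X (show n - 1 + 1 = n by omega)).comp ((d (n - 1)).comp (sigma n))
      + (gcast X (show n + 1 - 1 = n by omega)).comp ((sigma (n + 1)).comp (d n))
      = tau n - LinearMap.id

/-- The norm operator `N = 1 + τ + τ² + ⋯ + τ^{p-1}`. -/
def Nop (M : CircleModule k p) (n : ℤ) : M.X n →ₗ[k] M.X n :=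
  (∑ i ∈ Finset.range p, (M.tau n : Module.End k (M.X n)) ^ i : Module.End k (M.X n))

/-- The operator `(τ - 1)^m`. -/
def tauSubOnePow (M : CircleModule k p) (n : ℤ) (m : ℕ) : M.X n →ₗ[k] M.X n :=
  ((M.tau n - 1 : Module.End k (M.X n)) ^ m : Module.End k (M.X n))

/-- Degree-`n` part of the `S¹`-homotopy-fixed-point model `X[[t]]`:
`∏_{j ≥ 0} X^{n-2j}` (the coefficient of `t^j` lies in `X^{n-2j}`). -/
abbrev FixT (M : CircleModule k p) (n : ℤ) : Type :=
  (j : ℕ) → M.X (n - 2 * (j : ℤ))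

/-- Degree-`n` part of the `ℤ/p`-homotopy-fixed-point model `X[[t,θ]]`:
`(∏_{j ≥ 0} X^{n-2j}) × (∏_{j ≥ 0} X^{n-1-2j})` (coefficients of `t^j` and of `t^j θ`). -/
abbrev FixTheta (M : CircleModule k p) (n : ℤ) : Type :=
  FixT M n × FixT M (n - 1)

/-- Degree-`n` part of `X[[t]]⟨1,θ⟩ = X[[t]] ⊕ X[[t]]·θ`. -/
abbrev FixShift (M : CircleModule k p) (n : ℤ) : Type :=
  FixT M n × FixT M (n - 1)

/-- The differential of `X[[t]]`: the `t`-linear map determined by `x ↦ dx + N(σ(x))·t`. -/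
def fixTDiff (M : CircleModule k p) (n : ℤ) : FixT M n →ₗ[k] FixT M (n + 1) :=
  LinearMap.pi fun j =>
    (gcast M.X (show n - 2 * (j : ℤ) + 1 = n + 1 - 2 * (j : ℤ) by omega)).comp
        ((M.d (n - 2 * (j : ℤ))).comp (LinearMap.proj j))
    + if h : j = 0 then 0 else
        (gcast M.X (show n - 2 * ((j - 1 : ℕ) : ℤ) - 1 = n + 1 - 2 * (j : ℤ) by omega)).comp
          ((Nop M (n - 2 * ((j - 1 : ℕ) : ℤ) - 1)).comp
            ((M.sigma (n - 2 * ((j - 1 : ℕ) : ℤ))).comp (LinearMap.proj (j - 1))))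

/-- The differential of `X[[t,θ]]`: the `t`-linear map determined on homogeneous `x ∈ X` by
`x ↦ dx + (-1)^{|x|}(τ - 1)(x)·θ` and `x·θ ↦ (dx)·θ + (-1)^{|x|} N(x)·t`. -/
def fixThetaDiff (M : CircleModule k p) (n : ℤ) : FixTheta M n →ₗ[k] FixTheta M (n + 1) :=
  LinearMap.prod
    (LinearMap.pi fun j =>
      (gcast M.X (show n - 2 * (j : ℤ) + 1 = n + 1 - 2 * (j : ℤ) by omega)).comp
          ((M.d (n - 2 * (j : ℤ))).comp
            ((LinearMap.proj j).comp (LinearMap.fst k (FixT M n) (FixT M (n - 1)))))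
      + if h : j = 0 then 0 else
          sgn k (n + 1) •
            (gcast M.X
                (show n - 1 - 2 * ((j - 1 : ℕ) : ℤ) = n + 1 - 2 * (j : ℤ) by omega)).comp
              ((Nop M (n - 1 - 2 * ((j - 1 : ℕ) : ℤ))).comp
                ((LinearMap.proj (j - 1)).comp (LinearMap.snd k (FixT M n) (FixT M (n - 1))))))
    (LinearMap.pi fun j =>
      (gcast M.X (show n - 1 - 2 * (j : ℤ) + 1 = n + 1 - 1 - 2 * (j : ℤ) by omega)).comp
          ((M.d (n - 1 - 2 * (j : ℤ))).comp
            ((LinearMap.proj j).comp (LinearMap.snd k (FixT M n) (FixT M (n - 1)))))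
      + sgn k n •
          (gcast M.X (show n - 2 * (j : ℤ) = n + 1 - 1 - 2 * (j : ℤ) by omega)).comp
            ((M.tau (n - 2 * (j : ℤ)) - LinearMap.id).comp
              ((LinearMap.proj j).comp (LinearMap.fst k (FixT M n) (FixT M (n - 1))))))

/-- Cast along an equality of degrees for `X[[t]]`. -/
def fcast (M : CircleModule k p) {m n : ℤ} (h : m = n) : FixT M m →ₗ[k] FixT M n := by
  subst h; exact LinearMap.id

/-- Cast along an equality of degrees for `X[[t,θ]]`. -/
def fixThetaCast (M : CircleModule k p) {m n : ℤ} (h : m = n) :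
    FixTheta M m →ₗ[k] FixTheta M n := by
  subst h; exact LinearMap.id

/-- Cast along an equality of degrees for `X[[t]]⟨1,θ⟩`. -/
def fixShiftCast (M : CircleModule k p) {m n : ℤ} (h : m = n) :
    FixShift M m →ₗ[k] FixShift M n := by
  subst h; exact LinearMap.id

/-- The differential of `X[[t]]⟨1,θ⟩`, acting as the differential of `X[[t]]` on each of the
two summands (transported along the degree shift on the `θ`-summand). -/
def fixShiftDiff (M : CircleModule k p) (n : ℤ) : FixShift M n →ₗ[k] FixShift M (n + 1) :=
  LinearMap.prodMap (fixTDiff M n)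
    ((fcast M (show n - 1 + 1 = n + 1 - 1 by omega)).comp (fixTDiff M (n - 1)))

/-- The `ℤ/p`-Gysin comparison map `φ_p : X[[t]]⟨1,θ⟩ → X[[t,θ]]`, the `k[[t]]`-linear map
determined on homogeneous `x ∈ X` by `φ_p(x) = x + (-1)^{|x|} σ(x)·θ` and
`φ_p(x·θ) = x·θ + (-1)^{|x|} (τ - 1)^{p-2}(σ(x))·t`. -/
def gysinFix (M : CircleModule k p) (n : ℤ) : FixShift M n →ₗ[k] FixTheta M n :=
  LinearMap.prod
    (LinearMap.pi fun j =>
      (LinearMap.proj j).comp (LinearMap.fst k (FixT M n) (FixT M (n - 1)))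
      + if h : j = 0 then 0 else
          sgn k (n + 1) •
            (gcast M.X
                (show n - 1 - 2 * ((j - 1 : ℕ) : ℤ) - 1 = n - 2 * (j : ℤ) by omega)).comp
              ((tauSubOnePow M (n - 1 - 2 * ((j - 1 : ℕ) : ℤ) - 1) (p - 2)).comp
                ((M.sigma (n - 1 - 2 * ((j - 1 : ℕ) : ℤ))).comp
                  ((LinearMap.proj (j - 1)).comp
                    (LinearMap.snd k (FixT M n) (FixT M (n - 1)))))))
    (LinearMap.pi fun j =>
      (LinearMap.proj j).comp (LinearMap.snd k (FixT M n) (FixT M (n - 1)))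
      + sgn k n •
          (gcast M.X (show n - 2 * (j : ℤ) - 1 = n - 1 - 2 * (j : ℤ) by omega)).comp
            ((M.sigma (n - 2 * (j : ℤ))).comp
              ((LinearMap.proj j).comp (LinearMap.fst k (FixT M n) (FixT M (n - 1))))))

/-- Degree-`n` cohomology of the complex `X[[t,θ]]`: cocycles modulo coboundaries. -/
abbrev HFixTheta (M : CircleModule k p) (n : ℤ) : Type :=
  ↥(LinearMap.ker (fixThetaDiff M n)) ⧸
    Submodule.comap (LinearMap.ker (fixThetaDiff M n)).subtype
      (LinearMap.range
        ((fixThetaCast M (show n - 1 + 1 = n by omega)).comp (fixThetaDiff M (n - 1))))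

/-- Degree-`n` cohomology of the complex `X[[t]]`: cocycles modulo coboundaries. -/
abbrev HFixT (M : CircleModule k p) (n : ℤ) : Type :=
  ↥(LinearMap.ker (fixTDiff M n)) ⧸
    Submodule.comap (LinearMap.ker (fixTDiff M n)).subtype
      (LinearMap.range
        ((fcast M (show n - 1 + 1 = n by omega)).comp (fixTDiff M (n - 1))))

/-!
Write `φ_p = 1 + E`, where `E` is the off-diagonal part `x ↦ ±σ(x)·θ`,
`x·θ ↦ ±(τ - 1)^{p-2}σ(x)·t`. Since `σ² = 0` also `E² = 0`, so `φ_p` is invertible with inverse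
`1 - E = 2 - φ_p`. With the sign conventions of `X[[t,θ]]` it is this inverse, not `φ_p` itself,
that commutes with the differentials: coefficientwise this comes down to the homotopy
`dσ + σd = τ - 1`, to `σNσ = 0`, and to `N = (τ - 1)^{p-1}`, which holds in characteristic `p`.
Hence `H(X[[t,θ]]) ≅ H(X[[t]]⟨1,θ⟩)`, and `X[[t]]⟨1,θ⟩` is a direct sum of two copies of `X[[t]]`.
-/

section

variable {R : Type*} [Ring R] {A₀ A₁ A₂ B₀ B₁ B₂ : Type*}
  [AddCommGroup A₀] [Module R A₀] [AddCommGroup A₁] [Module R A₁]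
  [AddCommGroup A₂] [Module R A₂] [AddCommGroup B₀] [Module R B₀]
  [AddCommGroup B₁] [Module R B₁] [AddCommGroup B₂] [Module R B₂]

abbrev Cohomology (f : A₀ →ₗ[R] A₁) (g : A₁ →ₗ[R] A₂) : Type _ :=
  LinearMap.ker g ⧸ (LinearMap.range f).comap (LinearMap.ker g).subtype

namespace Cohomology

variable {f : A₀ →ₗ[R] A₁} {g : A₁ →ₗ[R] A₂} {f' : B₀ →ₗ[R] B₁} {g' : B₁ →ₗ[R] B₂}

noncomputable def equivOfEq {f₁ f₂ : A₀ →ₗ[R] A₁} (h : f₁ = f₂) :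
    Cohomology f₁ g ≃ₗ[R] Cohomology f₂ g :=
  Submodule.quotEquivOfEq _ _ (by rw [h])

noncomputable def congr (e₀ : A₀ →ₗ[R] B₀) (he₀ : Function.Surjective e₀) (e₁ : A₁ ≃ₗ[R] B₁)
    (e₂ : A₂ →ₗ[R] B₂) (he₂ : Function.Injective e₂)
    (hf : ∀ a, f' (e₀ a) = e₁ (f a)) (hg : ∀ a, g' (e₁ a) = e₂ (g a)) :
    Cohomology f g ≃ₗ[R] Cohomology f' g' :=
  have hker : (LinearMap.ker g).map (e₁ : A₁ →ₗ[R] B₁) = LinearMap.ker g' := by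
    ext b
    rw [Submodule.mem_map_equiv, LinearMap.mem_ker, LinearMap.mem_ker, ← he₂.eq_iff, ← hg,
      e₁.apply_symm_apply, map_zero]
  have hrange : ∀ b, e₁.symm b ∈ LinearMap.range f ↔ b ∈ LinearMap.range f' := fun b => by
    constructor
    · rintro ⟨a, ha⟩
      exact ⟨e₀ a, by rw [hf, ha, e₁.apply_symm_apply]⟩
    · rintro ⟨c, rfl⟩
      obtain ⟨a, rfl⟩ := he₀ c
      exact ⟨a, by rw [hf, e₁.symm_apply_apply]⟩
  Submodule.Quotient.equiv _ _ ((e₁.submoduleMap _).trans (LinearEquiv.ofEq _ _ hker)) <| by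
    ext ⟨b, hb⟩
    rw [Submodule.mem_map_equiv, Submodule.mem_comap, Submodule.mem_comap]
    exact hrange b

noncomputable def compEquiv (e : A₂ →ₗ[R] B₂) (he : Function.Injective e) :
    Cohomology f g ≃ₗ[R] Cohomology f (e ∘ₗ g) :=
  congr LinearMap.id Function.surjective_id (LinearEquiv.refl R _) e he (fun _ => rfl)
    fun _ => rfl

noncomputable def prodMk : LinearMap.ker (g.prodMap g') →ₗ[R] Cohomology f g × Cohomology f' g' :=
  (((LinearMap.range f).comap (LinearMap.ker g).subtype).mkQ ∘ₗ
      (LinearMap.fst R A₁ B₁).restrict fun _ hz => ((LinearMap.ker_prodMap g g').le hz).1).prod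
    (((LinearMap.range f').comap (LinearMap.ker g').subtype).mkQ ∘ₗ
      (LinearMap.snd R A₁ B₁).restrict fun _ hz => ((LinearMap.ker_prodMap g g').le hz).2)

noncomputable def prodEquiv :
    Cohomology (f.prodMap f') (g.prodMap g') ≃ₗ[R] Cohomology f g × Cohomology f' g' := by
  refine (Submodule.quotEquivOfEq _ _ ?_).trans (prodMk.quotKerEquivOfSurjective ?_)
  · ext z
    simp only [LinearMap.range_prodMap, Submodule.mem_comap, Submodule.subtype_apply,
      Submodule.mem_prod, LinearMap.mem_range, prodMk, LinearMap.ker_prod, Submodule.mem_inf,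
      LinearMap.mem_ker, LinearMap.coe_comp, Function.comp_apply, Submodule.mkQ_apply,
      Submodule.Quotient.mk_eq_zero]
    exact Iff.rfl
  · rintro ⟨⟨⟨a, ha⟩⟩, ⟨⟨b, hb⟩⟩⟩
    exact ⟨⟨(a, b), Prod.ext ha hb⟩, rfl⟩

end Cohomology

end

section CircleModule

@[simp] lemma gcast_gcast (X : ℤ → ModuleCat k) {a b c : ℤ} (h₁ : a = b) (h₂ : b = c)
    (x : X a) : gcast X h₂ (gcast X h₁ x) = gcast X (h₁.trans h₂) x := by
  subst h₁ h₂; rfl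

lemma gcast_eq_iff (X : ℤ → ModuleCat k) {a b : ℤ} (h : a = b) (x : X a) (y : X b) :
    gcast X h x = y ↔ x = gcast X h.symm y := by
  subst h; exact Iff.rfl

@[simp] lemma sgn_add_one (n : ℤ) : sgn k (n + 1) = -sgn k n := by
  by_cases h : Even n <;> simp [sgn, h]

@[simp] lemma sgn_mul_self (n : ℤ) : sgn k n * sgn k n = 1 := by
  by_cases h : Even n <;> simp [sgn, h]

variable (M : CircleModule k p)

@[simp] lemma d_gcast {a b : ℤ} (h : a = b) (x : M.X a) :
    M.d b (gcast M.X h x) = gcast M.X (congrArg (· + 1) h) (M.d a x) := by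
  subst h; rfl

@[simp] lemma sigma_gcast {a b : ℤ} (h : a = b) (x : M.X a) :
    M.sigma b (gcast M.X h x) = gcast M.X (congrArg (· - 1) h) (M.sigma a x) := by
  subst h; rfl

@[simp] lemma tau_gcast {a b : ℤ} (h : a = b) (x : M.X a) :
    M.tau b (gcast M.X h x) = gcast M.X h (M.tau a x) := by
  subst h; rfl

@[simp] lemma tauSubOnePow_gcast (m : ℕ) {a b : ℤ} (h : a = b) (x : M.X a) :
    tauSubOnePow M b m (gcast M.X h x) = gcast M.X h (tauSubOnePow M a m x) := by
  subst h; rfl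

lemma fcast_apply {m n : ℤ} (h : m = n) (w : FixT M m) (j : ℕ) :
    fcast M h w j = gcast M.X (by rw [h]) (w j) := by
  subst h; rfl

lemma fcast_comp_fcast {a b c : ℤ} (h₁ : a = b) (h₂ : b = c) :
    fcast M h₂ ∘ₗ fcast M h₁ = fcast M (h₁.trans h₂) := by
  subst h₁ h₂; rfl

lemma fcast_injective {m n : ℤ} (h : m = n) : Function.Injective (fcast M h) := by
  subst h; exact Function.injective_id

@[simp] lemma sigma_sigma_apply (a : ℤ) (x : M.X a) : M.sigma (a - 1) (M.sigma a x) = 0 :=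
  LinearMap.congr_fun (M.sigma_comp_sigma a) x

lemma tauSubOnePow_succ_apply (a : ℤ) (m : ℕ) (x : M.X a) :
    tauSubOnePow M a (m + 1) x = tauSubOnePow M a m (M.tau a x - x) := by
  rw [tauSubOnePow, pow_succ, Module.End.mul_apply]
  rfl

@[simp] lemma tauSubOnePow_d (m : ℕ) (a : ℤ) (x : M.X a) :
    tauSubOnePow M (a + 1) m (M.d a x) = M.d a (tauSubOnePow M a m x) := by
  induction m generalizing x with
  | zero => rfl
  | succ m ih =>
    rw [tauSubOnePow_succ_apply, tauSubOnePow_succ_apply, ← ih, map_sub (M.d a),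
      ← LinearMap.comp_apply (M.d a), M.d_comm_tau, LinearMap.comp_apply]

@[simp] lemma sigma_tauSubOnePow (m : ℕ) (a : ℤ) (x : M.X a) :
    M.sigma a (tauSubOnePow M a m x) = tauSubOnePow M (a - 1) m (M.sigma a x) := by
  induction m generalizing x with
  | zero => rfl
  | succ m ih =>
    rw [tauSubOnePow_succ_apply, tauSubOnePow_succ_apply, ih, map_sub,
      ← LinearMap.comp_apply (M.sigma a), M.sigma_comm_tau, LinearMap.comp_apply]

@[simp] lemma tauSubOnePow_tau (m : ℕ) (a : ℤ) (x : M.X a) :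
    tauSubOnePow M a m (M.tau a x) = tauSubOnePow M a (m + 1) x + tauSubOnePow M a m x := by
  rw [tauSubOnePow_succ_apply, ← map_add, sub_add_cancel]

@[simp] lemma tau_tauSubOnePow (m : ℕ) (a : ℤ) (x : M.X a) :
    M.tau a (tauSubOnePow M a m x) = tauSubOnePow M a (m + 1) x + tauSubOnePow M a m x := by
  have hcomm : Commute (M.tau a : Module.End k (M.X a)) ((M.tau a - 1) ^ m) :=
    ((Commute.refl _).sub_right (Commute.one_right _)).pow_right m
  rw [← tauSubOnePow_tau]
  exact LinearMap.congr_fun hcomm.eq x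

lemma sigma_d (a : ℤ) (x : M.X a) :
    M.sigma (a + 1) (M.d a x) = gcast M.X (by omega)
      (M.tau a x - x - gcast M.X (by omega) (M.d (a - 1) (M.sigma a x))) := by
  have h := LinearMap.congr_fun (M.d_sigma_homotopy a) x
  simp only [LinearMap.add_apply, LinearMap.comp_apply, LinearMap.sub_apply,
    LinearMap.id_apply] at h
  refine (gcast_eq_iff M.X (show a + 1 - 1 = a by omega) _ _).mp ?_
  rw [← h]
  abel

lemma nop_eq_tauSubOnePow (hp : p.Prime) [CharP k p] (a : ℤ) :
    Nop M a = tauSubOnePow M a (p - 1) := by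
  have : Fact p.Prime := ⟨hp⟩
  have hpoly : ∑ i ∈ Finset.range p, (Polynomial.X : Polynomial k) ^ i
      = (Polynomial.X - 1) ^ (p - 1) := by
    rw [← Polynomial.cyclotomic_prime, ← Polynomial.cyclotomic_one, ← pow_zero p, ← pow_one p]
    simpa using Polynomial.cyclotomic_mul_prime_pow_eq k (m := 1) (by simpa using hp.ne_one)
      one_pos
  simpa [Nop, tauSubOnePow] using
    congrArg (Polynomial.aeval (M.tau a : Module.End k (M.X a))) hpoly

end CircleModule

section Gysin

variable (M : CircleModule k p)

lemma gysinFix_sub_one_sq (n : ℤ) :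
    (gysinFix M n - 1 : Module.End k (FixTheta M n)) ^ 2 = 0 := by
  refine LinearMap.ext fun z => Prod.ext (funext fun j => ?_) (funext fun j => ?_) <;> cases j <;>
    simp [gysinFix, pow_two]

lemma gysinFix_gysinFix (n : ℤ) (z : FixShift M n) :
    gysinFix M n (gysinFix M n z) = 2 • gysinFix M n z - z := by
  have h := LinearMap.congr_fun (gysinFix_sub_one_sq M n) z
  simp only [pow_two, Module.End.mul_apply, LinearMap.sub_apply, Module.End.one_apply, map_sub,
    LinearMap.zero_apply] at h
  rw [← sub_eq_zero, ← h]
  abel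

def gysinChainMap (n : ℤ) : FixShift M n →ₗ[k] FixTheta M n :=
  2 • LinearMap.id - gysinFix M n

def gysinChainEquiv (n : ℤ) : FixShift M n ≃ₗ[k] FixTheta M n :=
  LinearEquiv.ofLinearMap (gysinChainMap M n) (gysinFix M n)
    (LinearMap.ext fun z => by simp [gysinChainMap, gysinFix_gysinFix])
    (LinearMap.ext fun z => by simp [gysinChainMap, gysinFix_gysinFix])

lemma fixThetaDiff_gysinChainMap (hp : p.Prime) [CharP k p] (n : ℤ) (z : FixShift M n) :
    fixThetaDiff M n (gysinChainMap M n z) = gysinChainMap M (n + 1) (fixShiftDiff M n z) := by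
  have hp' : p - 2 + 1 = p - 1 := by have := hp.two_le; omega
  refine Prod.ext (funext fun j => ?_) (funext fun j => ?_) <;> cases j <;>
    simp [gysinChainMap, gysinFix, fixThetaDiff, fixShiftDiff, fixTDiff, fcast_apply,
      nop_eq_tauSubOnePow M hp, sigma_d, hp', DFunLike.dite_apply, apply_dite, smul_add, smul_sub,
      smul_smul, two_smul] <;> abel

lemma fixThetaCast_gysinChainMap {m n : ℤ} (h : m = n) (z : FixShift M m) :
    fixThetaCast M h (gysinChainMap M m z) = gysinChainMap M n (fixShiftCast M h z) := by
  subst h; rfl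

lemma fixShiftCast_eq_prodMap {m n : ℤ} (h : m = n) :
    fixShiftCast M h = (fcast M h).prodMap (fcast M (congrArg (· - 1) h)) := by
  subst h; rfl

lemma fixShiftCast_comp_fixShiftDiff (n : ℤ) :
    fixShiftCast M (show n - 1 + 1 = n by omega) ∘ₗ fixShiftDiff M (n - 1) =
      (fcast M (show n - 1 + 1 = n by omega) ∘ₗ fixTDiff M (n - 1)).prodMap
        (fcast M (show n - 1 - 1 + 1 = n - 1 by omega) ∘ₗ fixTDiff M (n - 1 - 1)) := by
  rw [fixShiftCast_eq_prodMap, fixShiftDiff, LinearMap.prodMap_comp, ← LinearMap.comp_assoc,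
    fcast_comp_fcast]

noncomputable def cohomologyFixShiftEquivProd (n : ℤ) :
    Cohomology (fixShiftCast M (show n - 1 + 1 = n by omega) ∘ₗ fixShiftDiff M (n - 1))
        (fixShiftDiff M n) ≃ₗ[k] HFixT M n × HFixT M (n - 1) :=
  (Cohomology.equivOfEq (fixShiftCast_comp_fixShiftDiff M n)).trans <|
    Cohomology.prodEquiv.trans <| (LinearEquiv.refl k (HFixT M n)).prodCongr <|
      (Cohomology.compEquiv (f := fcast M (show n - 1 - 1 + 1 = n - 1 by omega) ∘ₗ
          fixTDiff M (n - 1 - 1)) (g := fixTDiff M (n - 1)) (fcast M _) (fcast_injective M _)).symm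

noncomputable def cohomologyFixShiftEquivHFixTheta (hp : p.Prime) [CharP k p] (n : ℤ) :
    Cohomology (fixShiftCast M (show n - 1 + 1 = n by omega) ∘ₗ fixShiftDiff M (n - 1))
        (fixShiftDiff M n) ≃ₗ[k] HFixTheta M n :=
  Cohomology.congr (gysinChainMap M (n - 1)) (gysinChainEquiv M (n - 1)).surjective
    (gysinChainEquiv M n) (gysinChainMap M (n + 1)) (gysinChainEquiv M (n + 1)).injective
    (fun a => (congrArg _ (fixThetaDiff_gysinChainMap M hp (n - 1) a)).trans
      (fixThetaCast_gysinChainMap M _ _))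
    fun a => fixThetaDiff_gysinChainMap M hp n a

end Gysin

theorem hFixTheta_split_general (hp : p.Prime) [CharP k p]
    (M : CircleModule k p) (n : ℤ) :
    Nonempty (HFixTheta M n ≃ₗ[k] HFixT M n × HFixT M (n - 1)) :=
  ⟨(cohomologyFixShiftEquivHFixTheta M hp n).symm.trans (cohomologyFixShiftEquivProd M n)⟩

/-- For any circle-module `X` over a field `k` of odd prime characteristic `p`
and every integer `n`, there is an isomorphism of `k`-vector spaces
`H^n(X[[t,θ]]) ≅ H^n(X[[t]]) ⊕ H^{n-1}(X[[t]])` (the mod-`p` `ℤ/p`-Gysin decomposition). -/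
theorem hFixTheta_split (hp : p.Prime) (hodd : Odd p) [CharP k p]
    (M : CircleModule k p) (n : ℤ) :
    Nonempty (HFixTheta M n ≃ₗ[k] HFixT M n × HFixT M (n - 1)) :=
  hFixTheta_split_general hp M n
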